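/- Let l > 0, R_{2l} := (0, 2l) × (−1, 1), and φ̂(w₁, w₂) := √(1 − w₂²). Let h : [0, 2l] → (−1, 1] be convex with h(0) = h(2l) = 1 and h(w₁) = h(2l − w₁), and set SG_h := {(w₁, w₂) ∈ R_{2l} : w₂ < h(w₁)}. Let ψ : closure(R_{2l}) → [0, 1] be continuous, locally Lipschitz on SG_h, with ψ = 0 on {(w₁, w₂) ∈ closure(R_{2l}) : w₂ ≥ h(w₁)} and on [0, 2l] × {−1}, ψ(0, w₂) = ψ(2l, w₂) = √(1 − w₂²) for w₂ ∈ [−1, 1], ψ < φ̂ everywhere on R_{2l}, and ∫_{SG_h} √(1 + |∇ψ|²) dw < ∞ (∇ψ the a.e. gradient). For m ∈ ℕ, m ≥ 1, define φ_m := max(φ̂ − 2/m, 0) and ψ_m := min( max(ψ − 1/m, 0), φ_m ). Then: (i) ψ_m is Lipschitz on closure(R_{2l}), ψ_m = 0 on ([0, 2l] × {−1}) ∪ {w₂ ≥ h(w₁)}, and ψ_m(0, ·) = φ_m(0, ·) on [−1, 1]; (ii) ψ_m → ψ uniformly on {0, 2l} × [−1, 1] as m → ∞; (iii) lim_{m→∞}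 ∫_{SG_h} √(1 + |∇ψ_m(w)|²) dw = ∫_{SG_h} √(1 + |∇ψ(w)|²) dw. -/

import Mathlib

open MeasureTheory Filter Metric Topology
open scoped ENNReal NNReal

noncomputable section

/-- The doubled rectangle `R_{2l} = (0, 2l) × (−1, 1)`. -/
def R2l (l : ℝ) : Set (ℝ × ℝ) := Set.Ioo 0 (2 * l) ×ˢ Set.Ioo (-1 : ℝ) 1

/-- The region below the graph of `h` inside `R_{2l}`. -/
def SGh (l : ℝ) (h : ℝ → ℝ) : Set (ℝ × ℝ) := {w | w ∈ R2l l ∧ w.2 < h w.1}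

/-- The function `φ̂(w₁, w₂) = √(1 − w₂²)`. -/
def phiHat (w : ℝ × ℝ) : ℝ := Real.sqrt (1 - w.2 ^ 2)

/-- Squared norm of the (a.e.-defined) gradient of `f : ℝ² → ℝ`. -/
def gradSq (f : ℝ × ℝ → ℝ) (w : ℝ × ℝ) : ℝ :=
  (fderiv ℝ f w (1, 0)) ^ 2 + (fderiv ℝ f w (0, 1)) ^ 2

/-- The truncation `φ_m := max(φ̂ − 2/m, 0)`. -/
def phiM (m : ℕ) (w : ℝ × ℝ) : ℝ := max (phiHat w - 2 / (m : ℝ)) 0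

/-- The regularization `ψ_m := min(max(ψ − 1/m, 0), φ_m)`. -/
def psiM (ψ : ℝ × ℝ → ℝ) (m : ℕ) (w : ℝ × ℝ) : ℝ :=
  min (max (ψ w - 1 / (m : ℝ)) 0) (phiM m w)

namespace RegAux

lemma phiHat_nonneg (w : ℝ × ℝ) : 0 ≤ phiHat w := Real.sqrt_nonneg _

lemma phiM_nonneg (m : ℕ) (w : ℝ × ℝ) : 0 ≤ phiM m w := le_max_right _ _

lemma psiM_nonneg (ψ : ℝ × ℝ → ℝ) (m : ℕ) (w : ℝ × ℝ) : 0 ≤ psiM ψ m w :=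
  le_min (le_max_right _ _) (phiM_nonneg m w)

lemma psiM_le_phiM (ψ : ℝ × ℝ → ℝ) (m : ℕ) (w : ℝ × ℝ) : psiM ψ m w ≤ phiM m w :=
  min_le_right _ _

lemma psiM_eq_zero_of_le {ψ : ℝ × ℝ → ℝ} {m : ℕ} {w : ℝ × ℝ} (hw : ψ w ≤ 1 / (m : ℝ)) :
    psiM ψ m w = 0 := by
  rw [psiM, max_eq_right (by linarith), min_eq_left (phiM_nonneg m w)]

lemma psiM_eq_phiM_of_ge {ψ : ℝ × ℝ → ℝ} {m : ℕ} {w : ℝ × ℝ}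
    (hw : phiHat w - 1 / (m : ℝ) ≤ ψ w) : psiM ψ m w = phiM m w := by
  have h2 : (2 : ℝ) / (m : ℝ) = 1 / (m : ℝ) + 1 / (m : ℝ) := by ring
  rw [psiM]
  apply min_eq_right
  rw [phiM]
  exact max_le_max (by rw [h2]; linarith) le_rfl

lemma continuous_phiHat : Continuous phiHat :=
  Real.continuous_sqrt.comp (continuous_const.sub (continuous_snd.pow 2))

lemma continuous_phiM (m : ℕ) : Continuous (phiM m) :=
  (continuous_phiHat.sub continuous_const).max continuous_const

lemma lipschitzOnWith_congr {f g : ℝ × ℝ → ℝ} {K : ℝ≥0} {s : Set (ℝ × ℝ)}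
    (hg : LipschitzOnWith K g s) (hfg : Set.EqOn f g s) : LipschitzOnWith K f s :=
  fun x hx y hy => by rw [hfg hx, hfg hy]; exact hg hx hy

lemma lipschitzOnWith_max_sub {f : ℝ × ℝ → ℝ} {K : ℝ≥0} {s : Set (ℝ × ℝ)} (c : ℝ)
    (hf : LipschitzOnWith K f s) :
    LipschitzOnWith K (fun x => max (f x - c) 0) s := by
  rw [lipschitzOnWith_iff_dist_le_mul] at hf ⊢
  intro x hx y hy
  rw [Real.dist_eq]
  calc |max (f x - c) 0 - max (f y - c) 0| ≤ |(f x - c) - (f y - c)| :=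
        abs_max_sub_max_le_abs _ _ _
    _ = |f x - f y| := by congr 1; ring
    _ ≤ K * dist x y := by rw [← Real.dist_eq]; exact hf x hx y hy

lemma lipschitzOnWith_min {f g : ℝ × ℝ → ℝ} {Kf Kg : ℝ≥0} {s : Set (ℝ × ℝ)}
    (hf : LipschitzOnWith Kf f s) (hg : LipschitzOnWith Kg g s) :
    LipschitzOnWith (max Kf Kg) (fun x => min (f x) (g x)) s := by
  rw [lipschitzOnWith_iff_dist_le_mul] at hf hg ⊢
  intro x hx y hy
  rw [Real.dist_eq]
  refine le_trans (abs_min_sub_min_le_max _ _ _ _) ?_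
  rw [NNReal.coe_max]
  refine max_le ?_ ?_
  · calc |f x - f y| = dist (f x) (f y) := (Real.dist_eq _ _).symm
      _ ≤ Kf * dist x y := hf x hx y hy
      _ ≤ max (Kf : ℝ) (Kg : ℝ) * dist x y :=
        mul_le_mul_of_nonneg_right (le_max_left _ _) dist_nonneg
  · calc |g x - g y| = dist (g x) (g y) := (Real.dist_eq _ _).symm
      _ ≤ Kg * dist x y := hg x hx y hy
      _ ≤ max (Kf : ℝ) (Kg : ℝ) * dist x y :=
        mul_le_mul_of_nonneg_right (le_max_right _ _) dist_nonneg

lemma sqrt_one_sub_sq_lipschitz {ρ : ℝ} (h0 : 0 ≤ ρ) (h1 : ρ < 1) :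
    LipschitzOnWith (1 / Real.sqrt (1 - ρ ^ 2)).toNNReal
      (fun y : ℝ => Real.sqrt (1 - y ^ 2)) (Set.Icc (-ρ) ρ) := by
  have hρ2 : 0 < 1 - ρ ^ 2 := by nlinarith
  have hs : 0 < Real.sqrt (1 - ρ ^ 2) := Real.sqrt_pos.2 hρ2
  refine (convex_Icc _ _).lipschitzOnWith_of_nnnorm_hasDerivWithin_le
      (f' := fun x => 1 / (2 * Real.sqrt (1 - x ^ 2)) * -(2 * x)) (fun x hx => ?_) (fun x hx => ?_)
  · have hx2 : x ^ 2 ≤ ρ ^ 2 := sq_le_sq' hx.1 hx.2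
    have hpos : 0 < 1 - x ^ 2 := by linarith
    have h2 : HasDerivAt (fun y : ℝ => 1 - y ^ 2) (-(2 * x)) x := by
      simpa using ((hasDerivAt_pow 2 x).const_sub 1)
    exact ((Real.hasDerivAt_sqrt hpos.ne').comp x h2).hasDerivWithinAt
  · have hx2 : x ^ 2 ≤ ρ ^ 2 := sq_le_sq' hx.1 hx.2
    have hpos : 0 < 1 - x ^ 2 := by linarith
    have hsx : 0 < Real.sqrt (1 - x ^ 2) := Real.sqrt_pos.2 hpos
    rw [← NNReal.coe_le_coe, coe_nnnorm, Real.coe_toNNReal _ (by positivity)]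
    have heq : 1 / (2 * Real.sqrt (1 - x ^ 2)) * -(2 * x)
        = -(x / Real.sqrt (1 - x ^ 2)) := by
      field_simp
    show |1 / (2 * Real.sqrt (1 - x ^ 2)) * -(2 * x)| ≤ 1 / Real.sqrt (1 - ρ ^ 2)
    rw [heq, abs_neg, abs_div, abs_of_nonneg hsx.le]
    have hxle : |x| ≤ 1 := by
      rw [abs_le]; constructor <;> [linarith [hx.1]; linarith [hx.2]]
    have hmono : Real.sqrt (1 - ρ ^ 2) ≤ Real.sqrt (1 - x ^ 2) :=
      Real.sqrt_le_sqrt (by linarith)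
    exact div_le_div₀ (by norm_num) hxle hs hmono

lemma phiHat_lipschitzOnWith {ρ : ℝ} (h0 : 0 ≤ ρ) (h1 : ρ < 1) :
    ∃ C : ℝ≥0, LipschitzOnWith C phiHat {w : ℝ × ℝ | |w.2| ≤ ρ} := by
  have hsnd : LipschitzOnWith 1 (Prod.snd : ℝ × ℝ → ℝ) {w : ℝ × ℝ | |w.2| ≤ ρ} :=
    LipschitzWith.prod_snd.lipschitzOnWith
  have hmaps : Set.MapsTo (Prod.snd : ℝ × ℝ → ℝ) {w : ℝ × ℝ | |w.2| ≤ ρ}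
      (Set.Icc (-ρ) ρ) := fun w hw => abs_le.1 hw
  exact ⟨_, (sqrt_one_sub_sq_lipschitz h0 h1).comp hsnd hmaps⟩

lemma exists_lipschitzOnWith_of_locally {s : Set (ℝ × ℝ)} (hs : IsCompact s) {f : ℝ × ℝ → ℝ}
    (hcont : ContinuousOn f s)
    (hloc : ∀ w ∈ s, ∃ (L : ℝ≥0) (r : ℝ), 0 < r ∧ LipschitzOnWith L f (ball w r ∩ s)) :
    ∃ L : ℝ≥0, LipschitzOnWith L f s := by
  rcases s.eq_empty_or_nonempty with hemp | hne
  · refine ⟨0, ?_⟩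
    rw [hemp]
    intro x hx
    exact absurd hx (Set.notMem_empty x)
  choose! L r hr hL using hloc
  obtain ⟨t, hts, hcover⟩ := hs.elim_nhds_subcover (fun w => ball w (r w / 2))
    (fun w hw => ball_mem_nhds w (by linarith [hr w hw]))
  have htne : t.Nonempty := by
    obtain ⟨x0, hx0⟩ := hne
    obtain ⟨w, hw, _⟩ := Set.mem_iUnion₂.1 (hcover hx0)
    exact ⟨w, hw⟩
  set δ : ℝ := t.inf' htne (fun w => r w / 2) with hδdef
  have hδpos : 0 < δ := by
    rw [hδdef, Finset.lt_inf'_iff]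
    exact fun w hw => by linarith [hr w (hts w hw)]
  set L0 : ℝ≥0 := t.sup' htne L with hL0def
  obtain ⟨B, hB⟩ := hs.exists_bound_of_continuousOn hcont
  have hB0 : 0 ≤ B := le_trans (norm_nonneg _) (hB _ hne.choose_spec)
  refine ⟨max L0 (2 * B / δ).toNNReal, ?_⟩
  rw [lipschitzOnWith_iff_dist_le_mul]
  intro x hx y hy
  have hcoe : ((max L0 (2 * B / δ).toNNReal : ℝ≥0) : ℝ)
      = max (L0 : ℝ) ((2 * B / δ).toNNReal : ℝ) := NNReal.coe_max _ _
  rcases lt_or_ge (dist x y) δ with hlt | hge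
  · obtain ⟨w, hwt, hxw⟩ := Set.mem_iUnion₂.1 (hcover hx)
    have hws : w ∈ s := hts w hwt
    have hxball : x ∈ ball w (r w) := by
      rw [mem_ball] at hxw ⊢
      linarith [hr w hws]
    have hyball : y ∈ ball w (r w) := by
      rw [mem_ball] at hxw ⊢
      have hδle : δ ≤ r w / 2 := Finset.inf'_le _ hwt
      calc dist y w ≤ dist y x + dist x w := dist_triangle _ _ _
        _ < δ + r w / 2 := by rw [dist_comm y x]; linarith
        _ ≤ r w := by linarith
    have hd := (lipschitzOnWith_iff_dist_le_mul.1 (hL w hws)) x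
      (Set.mem_inter hxball hx) y (Set.mem_inter hyball hy)
    calc dist (f x) (f y) ≤ (L w : ℝ) * dist x y := hd
      _ ≤ (max L0 (2 * B / δ).toNNReal : ℝ≥0) * dist x y := by
        apply mul_le_mul_of_nonneg_right _ dist_nonneg
        rw [hcoe]
        exact le_max_of_le_left (by exact_mod_cast Finset.le_sup' L hwt)
  · have h1 : dist (f x) (f y) ≤ 2 * B := by
      calc dist (f x) (f y) ≤ ‖f x‖ + ‖f y‖ := dist_le_norm_add_norm _ _
        _ ≤ B + B := add_le_add (hB x hx) (hB y hy)
        _ = 2 * B := by ring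
    have h2 : (2 * B / δ) * δ ≤ (2 * B / δ) * dist x y :=
      mul_le_mul_of_nonneg_left hge (by positivity)
    have h3 : (2 * B / δ) * δ = 2 * B := by field_simp
    calc dist (f x) (f y) ≤ 2 * B := h1
      _ = (2 * B / δ) * δ := h3.symm
      _ ≤ (2 * B / δ) * dist x y := h2
      _ ≤ (max L0 (2 * B / δ).toNNReal : ℝ≥0) * dist x y := by
        apply mul_le_mul_of_nonneg_right _ dist_nonneg
        rw [hcoe]
        exact le_max_of_le_right (by rw [Real.coe_toNNReal _ (by positivity)])

lemma isOpen_R2l (l : ℝ) : IsOpen (R2l l) := isOpen_Ioo.prod isOpen_Ioo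

lemma closure_R2l {l : ℝ} (hl : 0 < l) :
    closure (R2l l) = Set.Icc 0 (2 * l) ×ˢ Set.Icc (-1 : ℝ) 1 := by
  rw [R2l, closure_prod_eq, closure_Ioo (by linarith : (0 : ℝ) ≠ 2 * l),
    closure_Ioo (by norm_num : (-1 : ℝ) ≠ 1)]

lemma isOpen_SGh {l : ℝ} (hl : 0 < l) {h : ℝ → ℝ}
    (hconv : ConvexOn ℝ (Set.Icc 0 (2 * l)) h) : IsOpen (SGh l h) := by
  rw [isOpen_iff_mem_nhds]
  rintro w ⟨hwR, hwlt⟩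
  have hcon : ContinuousAt h w.1 := by
    have h1 := hconv.continuousOn_interior
    rw [interior_Icc] at h1
    exact h1.continuousAt (Ioo_mem_nhds hwR.1.1 hwR.1.2)
  have hc2 : ContinuousAt (fun p : ℝ × ℝ => h p.1 - p.2) w :=
    (hcon.comp continuousAt_fst).sub continuous_snd.continuousAt
  have hev : ∀ᶠ p in 𝓝 w, (0 : ℝ) < h p.1 - p.2 :=
    continuousAt_const.eventually_lt hc2 (by simpa using sub_pos.2 hwlt)
  filter_upwards [hev, (isOpen_R2l l).mem_nhds hwR] with p hp1 hp2
  exact ⟨hp2, by linarith⟩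

lemma hasFDerivAt_phiHat {w : ℝ × ℝ} (hw : w.2 ^ 2 < 1) :
    HasFDerivAt phiHat
      ((1 / (2 * Real.sqrt (1 - w.2 ^ 2)) * -(2 * w.2)) • ContinuousLinearMap.snd ℝ ℝ ℝ) w := by
  have hpos : 0 < 1 - w.2 ^ 2 := by linarith
  have h2 : HasDerivAt (fun y : ℝ => 1 - y ^ 2) (-(2 * w.2)) w.2 := by
    simpa using ((hasDerivAt_pow 2 w.2).const_sub 1)
  have h3 : HasDerivAt (fun y : ℝ => Real.sqrt (1 - y ^ 2))
      (1 / (2 * Real.sqrt (1 - w.2 ^ 2)) * -(2 * w.2)) w.2 :=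
    (Real.hasDerivAt_sqrt hpos.ne').comp w.2 h2
  exact h3.comp_hasFDerivAt w hasFDerivAt_snd

lemma gradSq_phiHat {w : ℝ × ℝ} (hw : w.2 ^ 2 < 1) :
    gradSq phiHat w = w.2 ^ 2 / (1 - w.2 ^ 2) := by
  have hpos : 0 < 1 - w.2 ^ 2 := by linarith
  have hs : 0 < Real.sqrt (1 - w.2 ^ 2) := Real.sqrt_pos.2 hpos
  have hd := (hasFDerivAt_phiHat hw).fderiv
  rw [gradSq, hd]
  simp only [ContinuousLinearMap.smul_apply, ContinuousLinearMap.coe_snd', smul_eq_mul, mul_zero, mul_one]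
  have hsq : Real.sqrt (1 - w.2 ^ 2) ^ 2 = 1 - w.2 ^ 2 := Real.sq_sqrt hpos.le
  field_simp
  nlinarith [hsq, hs]

lemma sqrt_one_add_gradSq_phiHat {w : ℝ × ℝ} (hw : w.2 ^ 2 < 1) :
    Real.sqrt (1 + gradSq phiHat w) = (Real.sqrt (1 - w.2 ^ 2))⁻¹ := by
  have hpos : 0 < 1 - w.2 ^ 2 := by linarith
  rw [gradSq_phiHat hw]
  have h1 : 1 + w.2 ^ 2 / (1 - w.2 ^ 2) = (1 - w.2 ^ 2)⁻¹ := by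
    field_simp
    ring
  rw [h1, Real.sqrt_inv]

lemma psiM_fderiv_zero_of_le {ψ : ℝ × ℝ → ℝ} {m : ℕ} {w : ℝ × ℝ}
    (hw : ψ w ≤ 1 / (m : ℝ)) : fderiv ℝ (psiM ψ m) w = 0 := by
  have h0 : psiM ψ m w = 0 := psiM_eq_zero_of_le hw
  have hmin : IsLocalMin (psiM ψ m) w :=
    Filter.Eventually.of_forall (fun x => by rw [h0]; exact psiM_nonneg ψ m x)
  exact hmin.fderiv_eq_zero

lemma psiM_fderiv_eq_psi {ψ : ℝ × ℝ → ℝ} {m : ℕ} {w : ℝ × ℝ}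
    (hcont : ContinuousAt ψ w) (h1 : 1 / (m : ℝ) < ψ w)
    (h2 : ψ w - 1 / (m : ℝ) < phiM m w) :
    fderiv ℝ (psiM ψ m) w = fderiv ℝ ψ w := by
  have hev1 : ∀ᶠ x in 𝓝 w, 1 / (m : ℝ) < ψ x := hcont.eventually (eventually_gt_nhds h1)
  have hev2 : ∀ᶠ x in 𝓝 w, ψ x - 1 / (m : ℝ) < phiM m x :=
    (hcont.sub continuousAt_const).eventually_lt (continuous_phiM m).continuousAt h2
  have heq : psiM ψ m =ᶠ[𝓝 w] fun x => ψ x - 1 / (m : ℝ) := by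
    filter_upwards [hev1, hev2] with x hx1 hx2
    rw [psiM, max_eq_left (by linarith), min_eq_left hx2.le]
  rw [heq.fderiv_eq, fderiv_sub_const]

lemma phiM_fderiv_cases (m : ℕ) (w : ℝ × ℝ) :
    fderiv ℝ (phiM m) w = 0 ∨
      (w.2 ^ 2 < 1 ∧ fderiv ℝ (phiM m) w = fderiv ℝ phiHat w) := by
  rcases lt_trichotomy (phiHat w) (2 / (m : ℝ)) with hlt | heq | hgt
  · left
    have hev : ∀ᶠ x in 𝓝 w, phiHat x < 2 / (m : ℝ) :=
      continuous_phiHat.continuousAt.eventually (eventually_lt_nhds hlt)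
    have heq0 : phiM m =ᶠ[𝓝 w] fun _ => (0 : ℝ) := by
      filter_upwards [hev] with x hx
      rw [phiM]; exact max_eq_right (by linarith)
    rw [heq0.fderiv_eq]
    exact fderiv_const_apply 0
  · left
    have h0 : phiM m w = 0 := by rw [phiM]; exact max_eq_right (by linarith)
    have hmin : IsLocalMin (phiM m) w :=
      Filter.Eventually.of_forall (fun x => by rw [h0]; exact phiM_nonneg m x)
    exact hmin.fderiv_eq_zero
  · right
    have h2m : (0 : ℝ) ≤ 2 / (m : ℝ) := by positivity
    have hpos : 0 < phiHat w := lt_of_le_of_lt h2m hgt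
    have hw2 : w.2 ^ 2 < 1 := by
      have := Real.sqrt_pos.mp hpos
      linarith
    have hev : ∀ᶠ x in 𝓝 w, 2 / (m : ℝ) < phiHat x :=
      continuous_phiHat.continuousAt.eventually (eventually_gt_nhds hgt)
    have heq : phiM m =ᶠ[𝓝 w] fun x => phiHat x - 2 / (m : ℝ) := by
      filter_upwards [hev] with x hx
      rw [phiM]; exact max_eq_left (by linarith)
    exact ⟨hw2, by rw [heq.fderiv_eq, fderiv_sub_const]⟩

lemma psiM_fderiv_cases {ψ : ℝ × ℝ → ℝ} {m : ℕ} {w : ℝ × ℝ}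
    (hcont : ContinuousAt ψ w) :
    fderiv ℝ (psiM ψ m) w = 0 ∨ fderiv ℝ (psiM ψ m) w = fderiv ℝ ψ w ∨
      (w.2 ^ 2 < 1 ∧ fderiv ℝ (psiM ψ m) w = fderiv ℝ phiHat w) := by
  rcases le_or_gt (ψ w) (1 / (m : ℝ)) with hle | hgt
  · exact Or.inl (psiM_fderiv_zero_of_le hle)
  rcases lt_trichotomy (ψ w - 1 / (m : ℝ)) (phiM m w) with hlt | heq | hgt2
  · exact Or.inr (Or.inl (psiM_fderiv_eq_psi hcont hgt hlt))
  · have hpos : 0 < phiM m w := heq ▸ (by linarith)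
    have hb : 2 / (m : ℝ) < phiHat w := by
      by_contra hc
      push_neg at hc
      have h0 : phiM m w = 0 := by rw [phiM]; exact max_eq_right (by linarith)
      rw [h0] at hpos; exact lt_irrefl 0 hpos
    have hw2 : w.2 ^ 2 < 1 := by
      have hpos2 : 0 < phiHat w := lt_of_le_of_lt (by positivity) hb
      have := Real.sqrt_pos.mp hpos2
      linarith
    have hev : ∀ᶠ x in 𝓝 w, 2 / (m : ℝ) < phiHat x :=
      continuous_phiHat.continuousAt.eventually (eventually_gt_nhds hb)
    have hphiM_ev : phiM m =ᶠ[𝓝 w] fun x => phiHat x - 2 / (m : ℝ) := by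
      filter_upwards [hev] with x hx
      rw [phiM]; exact max_eq_left (by linarith)
    by_cases hd : DifferentiableAt ℝ (psiM ψ m) w
    · right; right
      refine ⟨hw2, ?_⟩
      have hdphiM : DifferentiableAt ℝ (phiM m) w :=
        (((hasFDerivAt_phiHat hw2).differentiableAt).sub_const
          (2 / (m : ℝ))).congr_of_eventuallyEq hphiM_ev
      have hpsiw : psiM ψ m w = phiM m w := by
        rw [psiM, max_eq_left (by linarith), heq, min_self]
      have hmin : IsLocalMin (fun x => phiM m x - psiM ψ m x) w :=
        Filter.Eventually.of_forall (fun x => by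
          have h1 := psiM_le_phiM ψ m x
          simp only []
          rw [hpsiw]
          linarith)
      have h0 := hmin.fderiv_eq_zero
      change fderiv ℝ (phiM m - psiM ψ m) w = 0 at h0
      rw [fderiv_sub hdphiM hd, sub_eq_zero] at h0
      rw [← h0, hphiM_ev.fderiv_eq, fderiv_sub_const]
    · exact Or.inl (fderiv_zero_of_not_differentiableAt hd)
  · have hev : ∀ᶠ x in 𝓝 w, phiM m x < ψ x - 1 / (m : ℝ) :=
      (continuous_phiM m).continuousAt.eventually_lt (hcont.sub continuousAt_const) hgt2
    have heq2 : psiM ψ m =ᶠ[𝓝 w] phiM m := by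
      filter_upwards [hev] with x hx
      rw [psiM]
      exact min_eq_right (le_trans hx.le (le_max_left _ _))
    rw [heq2.fderiv_eq]
    rcases phiM_fderiv_cases m w with h0 | ⟨hw2, hphi⟩
    · exact Or.inl h0
    · exact Or.inr (Or.inr ⟨hw2, hphi⟩)

lemma measurable_gradSq (f : ℝ × ℝ → ℝ) : Measurable (gradSq f) :=
  ((measurable_fderiv_apply_const ℝ f ((1 : ℝ), (0 : ℝ))).pow_const 2).add
    ((measurable_fderiv_apply_const ℝ f ((0 : ℝ), (1 : ℝ))).pow_const 2)

lemma measurable_area_integrand (f : ℝ × ℝ → ℝ) :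
    Measurable (fun w => ENNReal.ofReal (Real.sqrt (1 + gradSq f w))) :=
  ((Real.continuous_sqrt.measurable).comp
    ((measurable_const.add (measurable_gradSq f)))).ennreal_ofReal

lemma integrableOn_inv_sqrt :
    IntegrableOn (fun y : ℝ => (Real.sqrt (1 - y ^ 2))⁻¹) (Set.Ioo (-1 : ℝ) 1) := by
  have h := intervalIntegral.integrableOn_deriv_of_nonneg
    (g := Real.arcsin) (g' := fun y : ℝ => (Real.sqrt (1 - y ^ 2))⁻¹)
    (a := (-1 : ℝ)) (b := 1)
    Real.continuous_arcsin.continuousOn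
    (fun x hx => by
      have := Real.hasDerivAt_arcsin (ne_of_gt hx.1) (ne_of_lt hx.2)
      simpa [one_div] using this)
    (fun x hx => by positivity)
  exact h.mono_set Set.Ioo_subset_Ioc_self

lemma lintegral_inv_sqrt_lt_top :
    ∫⁻ y in Set.Ioo (-1 : ℝ) 1, ENNReal.ofReal ((Real.sqrt (1 - y ^ 2))⁻¹) < ⊤ :=
  integrableOn_inv_sqrt.lintegral_lt_top

lemma lintegral_R2l_inv_sqrt_lt_top (l : ℝ) :
    ∫⁻ w in R2l l, ENNReal.ofReal ((Real.sqrt (1 - w.2 ^ 2))⁻¹) < ⊤ := by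
  have hmeas : Measurable (fun w : ℝ × ℝ => ENNReal.ofReal ((Real.sqrt (1 - w.2 ^ 2))⁻¹)) := by
    apply Measurable.ennreal_ofReal
    exact (Real.continuous_sqrt.comp (continuous_const.sub (continuous_snd.pow 2))).measurable.inv
  have hrestrict : (volume : Measure (ℝ × ℝ)).restrict (R2l l)
      = (volume.restrict (Set.Ioo 0 (2 * l))).prod (volume.restrict (Set.Ioo (-1 : ℝ) 1)) := by
    rw [R2l, MeasureTheory.Measure.volume_eq_prod ℝ ℝ]
    exact (Measure.prod_restrict _ _).symm
  rw [hrestrict, lintegral_prod _ hmeas.aemeasurable]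
  simp only []
  rw [lintegral_const, Measure.restrict_apply_univ]
  apply ENNReal.mul_lt_top lintegral_inv_sqrt_lt_top
  simp [Real.volume_Ioo]
  exact ENNReal.mul_lt_top (by simp) ENNReal.ofReal_lt_top

end RegAux

/-- Properties of the regularizations `ψ_m` of a minimizer `(h, ψ)`:
(i) each `ψ_m` is Lipschitz on the closed rectangle, vanishes on the bottom edge and
above the graph of `h`, and agrees with `φ_m` on the lateral edge `{0} × [−1, 1]`;
(ii) `ψ_m → ψ` uniformly on `{0, 2l} × [−1, 1]`;
(iii) the graph areas of `ψ_m` over `SG_h` converge to the graph area of `ψ`. -/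


theorem regularization_properties (l : ℝ) (hl : 0 < l)
    (h : ℝ → ℝ) (hconv : ConvexOn ℝ (Set.Icc 0 (2 * l)) h)
    (hmem : ∀ w ∈ Set.Icc (0 : ℝ) (2 * l), h w ∈ Set.Ioc (-1 : ℝ) 1)
    (h0 : h 0 = 1) (h2l : h (2 * l) = 1)
    (hsym : ∀ w ∈ Set.Icc (0 : ℝ) (2 * l), h w = h (2 * l - w))
    (ψ : ℝ × ℝ → ℝ)
    (hψc : ContinuousOn ψ (closure (R2l l)))
    (hψlip : ∀ w ∈ SGh l h, ∃ (K : ℝ≥0) (r : ℝ), 0 < r ∧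
      LipschitzOnWith K ψ (ball w r ∩ SGh l h))
    (hψmem : ∀ w ∈ closure (R2l l), ψ w ∈ Set.Icc (0 : ℝ) 1)
    (hψ0 : ∀ w ∈ closure (R2l l), h w.1 ≤ w.2 → ψ w = 0)
    (hψbot : ∀ t ∈ Set.Icc (0 : ℝ) (2 * l), ψ (t, -1) = 0)
    (hψlat : ∀ s ∈ Set.Icc (-1 : ℝ) 1,
      ψ (0, s) = Real.sqrt (1 - s ^ 2) ∧ ψ (2 * l, s) = Real.sqrt (1 - s ^ 2))
    (hψlt : ∀ w ∈ R2l l, ψ w < phiHat w)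
    (harea : ∫⁻ w in SGh l h, ENNReal.ofReal (Real.sqrt (1 + gradSq ψ w)) < ⊤) :
    -- (i)
    (∀ m : ℕ, 1 ≤ m →
      (∃ K : ℝ≥0, LipschitzOnWith K (psiM ψ m) (closure (R2l l))) ∧
      (∀ t ∈ Set.Icc (0 : ℝ) (2 * l), psiM ψ m (t, -1) = 0) ∧
      (∀ w ∈ closure (R2l l), h w.1 ≤ w.2 → psiM ψ m w = 0) ∧
      (∀ s ∈ Set.Icc (-1 : ℝ) 1, psiM ψ m (0, s) = phiM m (0, s))) ∧
    -- (ii)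
    TendstoUniformlyOn (fun m => psiM ψ m) ψ atTop
      (({0, 2 * l} : Set ℝ) ×ˢ Set.Icc (-1 : ℝ) 1) ∧
    -- (iii)
    Tendsto (fun m => ∫⁻ w in SGh l h, ENNReal.ofReal (Real.sqrt (1 + gradSq (psiM ψ m) w)))
      atTop (𝓝 (∫⁻ w in SGh l h, ENNReal.ofReal (Real.sqrt (1 + gradSq ψ w)))) := by
  have hclos := RegAux.closure_R2l hl
  have hRsub : R2l l ⊆ closure (R2l l) := subset_closure
  have hSGopen : IsOpen (SGh l h) := RegAux.isOpen_SGh hl hconv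
  have hSGsub : SGh l h ⊆ R2l l := fun w hw => hw.1
  have hψcontAt : ∀ w ∈ R2l l, ContinuousAt ψ w := fun w hw =>
    hψc.continuousAt (Filter.mem_of_superset ((RegAux.isOpen_R2l l).mem_nhds hw) hRsub)
  refine ⟨?_, ?_, ?_⟩
  · -- ========== part (i) ==========
    intro m hm
    have hmpos : (0 : ℝ) < (m : ℝ) := by exact_mod_cast hm
    have hcpos : (0 : ℝ) < 1 / (m : ℝ) := by positivity
    refine ⟨?_, ?_, ?_, ?_⟩
    · -- Lipschitz on the closed rectangle
      apply RegAux.exists_lipschitzOnWith_of_locally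
      · rw [hclos]; exact isCompact_Icc.prod isCompact_Icc
      · show ContinuousOn (fun w => min (max (ψ w - 1 / (m : ℝ)) 0) (phiM m w))
          (closure (R2l l))
        have hmax : ContinuousOn (fun w => max (ψ w - 1 / (m : ℝ)) 0) (closure (R2l l)) :=
          ContinuousOn.sup (hψc.sub continuousOn_const) continuousOn_const
        exact ContinuousOn.inf hmax (RegAux.continuous_phiM m).continuousOn
      · intro w hw
        by_cases hA : ψ w < 1 / (m : ℝ)
        · -- near w, ψ < 1/m, so ψ_m ≡ 0
          have hcw : ContinuousWithinAt ψ (closure (R2l l)) w := hψc w hw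
          have hev : ∀ᶠ x in 𝓝[closure (R2l l)] w, ψ x < 1 / (m : ℝ) :=
            hcw.eventually (eventually_lt_nhds hA)
          obtain ⟨r, hr, hball⟩ := mem_nhdsWithin_iff.1 hev
          refine ⟨0, r, hr, ?_⟩
          apply RegAux.lipschitzOnWith_congr ((LipschitzWith.const (0 : ℝ)).lipschitzOnWith)
          intro x hx
          exact RegAux.psiM_eq_zero_of_le (le_of_lt (hball hx))
        by_cases hB : phiHat w < 2 / (m : ℝ)
        · -- near w, φ̂ < 2/m, so φ_m ≡ 0 and hence ψ_m ≡ 0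
          have hev : ∀ᶠ x in 𝓝 w, phiHat x < 2 / (m : ℝ) :=
            RegAux.continuous_phiHat.continuousAt.eventually (eventually_lt_nhds hB)
          obtain ⟨r, hr, hball⟩ := Metric.eventually_nhds_iff_ball.1 hev
          refine ⟨0, r, hr, ?_⟩
          apply RegAux.lipschitzOnWith_congr ((LipschitzWith.const (0 : ℝ)).lipschitzOnWith)
          intro x hx
          show psiM ψ m x = 0
          have hphiM0 : phiM m x = 0 := max_eq_right (by linarith [hball x hx.1])
          rw [psiM, hphiM0]
          exact min_eq_right (le_max_right _ _)
        by_cases hC : phiHat w - 1 / (m : ℝ) < ψ w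
        · -- near w, ψ > φ̂ - 1/m, so ψ_m ≡ φ_m which is Lipschitz on a strip
          push_neg at hB
          have h2mpos : (0 : ℝ) < 2 / (m : ℝ) := by positivity
          have hbpos : 0 < phiHat w := lt_of_lt_of_le h2mpos hB
          have hsq := Real.sqrt_pos.mp hbpos
          have habs : |w.2| < 1 := by nlinarith [sq_abs w.2, abs_nonneg w.2]
          have hρ0 : (0 : ℝ) ≤ (1 + |w.2|) / 2 := by positivity
          have hρ1 : (1 + |w.2|) / 2 < 1 := by linarith
          obtain ⟨C, hCρ⟩ := RegAux.phiHat_lipschitzOnWith hρ0 hρ1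
          have hcw : ContinuousWithinAt (fun x => ψ x - phiHat x) (closure (R2l l)) w :=
            (hψc w hw).sub RegAux.continuous_phiHat.continuousWithinAt
          have hev : ∀ᶠ x in 𝓝[closure (R2l l)] w, -(1 / (m : ℝ)) < ψ x - phiHat x :=
            hcw.eventually (eventually_gt_nhds (by linarith))
          obtain ⟨r2, hr2, hball2⟩ := mem_nhdsWithin_iff.1 hev
          refine ⟨C, min r2 ((1 - |w.2|) / 2), lt_min hr2 (by linarith), ?_⟩
          have hstrip : (ball w (min r2 ((1 - |w.2|) / 2)) ∩ closure (R2l l))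
              ⊆ {x : ℝ × ℝ | |x.2| ≤ (1 + |w.2|) / 2} := by
            intro x hx
            have hd2 : dist x.2 w.2 ≤ dist x w := by
              rw [Prod.dist_eq]; exact le_max_right _ _
            have hlt2 : |x.2 - w.2| < (1 - |w.2|) / 2 := by
              rw [← Real.dist_eq]
              exact lt_of_le_of_lt hd2 (lt_of_lt_of_le (mem_ball.1 hx.1) (min_le_right _ _))
            have h5 := abs_sub_abs_le_abs_sub x.2 w.2
            show |x.2| ≤ (1 + |w.2|) / 2
            linarith
          have hphiS : LipschitzOnWith C (phiM m)
              (ball w (min r2 ((1 - |w.2|) / 2)) ∩ closure (R2l l)) :=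
            RegAux.lipschitzOnWith_congr
              (RegAux.lipschitzOnWith_max_sub (2 / (m : ℝ)) (hCρ.mono hstrip))
              (fun x _ => rfl)
          apply RegAux.lipschitzOnWith_congr hphiS
          intro x hx
          have hx2 : x ∈ ball w r2 ∩ closure (R2l l) :=
            ⟨mem_ball.2 (lt_of_lt_of_le (mem_ball.1 hx.1) (min_le_left _ _)), hx.2⟩
          have h5 : -(1 / (m : ℝ)) < ψ x - phiHat x := hball2 hx2
          exact RegAux.psiM_eq_phiM_of_ge (by linarith)
        · -- remaining case: w lies in SG_h, use interior Lipschitz bound for ψ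
          push_neg at hA hB hC
          have hwc := hw
          rw [hclos] at hwc
          obtain ⟨hw1, hw2⟩ := hwc
          have hphw : phiHat w = Real.sqrt (1 - w.2 ^ 2) := rfl
          have hne0 : w.1 ≠ 0 := by
            intro h00
            have hlat := (hψlat w.2 hw2).1
            have hψw : ψ w = Real.sqrt (1 - w.2 ^ 2) := by
              rw [← hlat]; congr 1; exact Prod.ext h00 rfl
            rw [hψw, ← hphw] at hC
            linarith
          have hne2l : w.1 ≠ 2 * l := by
            intro h00
            have hlat := (hψlat w.2 hw2).2
            have hψw : ψ w = Real.sqrt (1 - w.2 ^ 2) := by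
              rw [← hlat]; congr 1; exact Prod.ext h00 rfl
            rw [hψw, ← hphw] at hC
            linarith
          have hw1o : w.1 ∈ Set.Ioo (0 : ℝ) (2 * l) :=
            ⟨lt_of_le_of_ne hw1.1 (Ne.symm hne0), lt_of_le_of_ne hw1.2 hne2l⟩
          have hw2o : w.2 ∈ Set.Ioo (-1 : ℝ) 1 := by
            have h2mpos : (0 : ℝ) < 2 / (m : ℝ) := by positivity
            have hbpos : 0 < phiHat w := lt_of_lt_of_le h2mpos hB
            have hsq := Real.sqrt_pos.mp hbpos
            constructor <;> nlinarith
          have hwR : w ∈ R2l l := ⟨hw1o, hw2o⟩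
          have hlth : w.2 < h w.1 := by
            by_contra hge
            push_neg at hge
            have := hψ0 w hw hge
            linarith
          have hwSG : w ∈ SGh l h := ⟨hwR, hlth⟩
          obtain ⟨K, r0, hr0, hKlip⟩ := hψlip w hwSG
          obtain ⟨r1, hr1, hball1⟩ := Metric.isOpen_iff.1 hSGopen w hwSG
          have habs : |w.2| < 1 := abs_lt.2 ⟨hw2o.1, hw2o.2⟩
          have hρ0 : (0 : ℝ) ≤ (1 + |w.2|) / 2 := by positivity
          have hρ1 : (1 + |w.2|) / 2 < 1 := by linarith
          obtain ⟨C, hCρ⟩ := RegAux.phiHat_lipschitzOnWith hρ0 hρ1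
          refine ⟨max K C, min (min r0 r1) ((1 - |w.2|) / 2),
            lt_min (lt_min hr0 hr1) (by linarith), ?_⟩
          set S := ball w (min (min r0 r1) ((1 - |w.2|) / 2)) ∩ closure (R2l l) with hSdef
          have hSball : ∀ x ∈ S, dist x w < min (min r0 r1) ((1 - |w.2|) / 2) :=
            fun x hx => mem_ball.1 hx.1
          have hstrip : S ⊆ {x : ℝ × ℝ | |x.2| ≤ (1 + |w.2|) / 2} := by
            intro x hx
            have hd2 : dist x.2 w.2 ≤ dist x w := by
              rw [Prod.dist_eq]; exact le_max_right _ _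
            have hlt2 : |x.2 - w.2| < (1 - |w.2|) / 2 := by
              rw [← Real.dist_eq]
              exact lt_of_le_of_lt hd2 (lt_of_lt_of_le (hSball x hx) (min_le_right _ _))
            have h5 := abs_sub_abs_le_abs_sub x.2 w.2
            show |x.2| ≤ (1 + |w.2|) / 2
            linarith
          have hψS : LipschitzOnWith K ψ S := by
            apply hKlip.mono
            intro x hx
            refine ⟨mem_ball.2 (lt_of_lt_of_le (hSball x hx)
              (le_trans (min_le_left _ _) (min_le_left _ _))), ?_⟩
            exact hball1 (mem_ball.2 (lt_of_lt_of_le (hSball x hx)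
              (le_trans (min_le_left _ _) (min_le_right _ _))))
          have hphiS : LipschitzOnWith C (phiM m) S :=
            RegAux.lipschitzOnWith_congr
              (RegAux.lipschitzOnWith_max_sub (2 / (m : ℝ)) (hCρ.mono hstrip))
              (fun x _ => rfl)
          exact RegAux.lipschitzOnWith_congr
            (RegAux.lipschitzOnWith_min
              (RegAux.lipschitzOnWith_max_sub (1 / (m : ℝ)) hψS) hphiS)
            (fun x _ => rfl)
    · -- vanishing on the bottom edge
      intro t ht
      exact RegAux.psiM_eq_zero_of_le (by rw [hψbot t ht]; positivity)
    · -- vanishing above the graph of h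
      intro w hw hle
      exact RegAux.psiM_eq_zero_of_le (by rw [hψ0 w hw hle]; positivity)
    · -- agreement with φ_m on the lateral edge
      intro s hs
      apply RegAux.psiM_eq_phiM_of_ge
      have hlat := (hψlat s hs).1
      have hph : phiHat ((0 : ℝ), s) = Real.sqrt (1 - s ^ 2) := rfl
      rw [hlat, hph]
      have h5 : (0 : ℝ) ≤ 1 / (m : ℝ) := by positivity
      linarith
  · -- ========== part (ii) ==========
    rw [Metric.tendstoUniformlyOn_iff]
    intro ε hε
    obtain ⟨N, hN⟩ := exists_nat_gt (2 / ε)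
    filter_upwards [eventually_ge_atTop (N + 1)] with m hm
    rintro x ⟨hx1, hx2⟩
    have hmpos : (0 : ℝ) < (m : ℝ) := by
      have h1 : 1 ≤ m := le_trans (Nat.le_add_left 1 N) hm
      exact_mod_cast h1
    have hψx : ψ x = Real.sqrt (1 - x.2 ^ 2) := by
      rcases hx1 with h00 | h2l'
      · have := (hψlat x.2 hx2).1
        rw [← this]; congr 1; exact Prod.ext h00 rfl
      · have := (hψlat x.2 hx2).2
        rw [← this]; congr 1; exact Prod.ext (by simpa using h2l') rfl
    have hphix : phiHat x = Real.sqrt (1 - x.2 ^ 2) := rfl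
    have hpsix : psiM ψ m x = phiM m x := by
      apply RegAux.psiM_eq_phiM_of_ge
      rw [hψx, hphix]
      have h5 : (0 : ℝ) ≤ 1 / (m : ℝ) := by positivity
      linarith
    have hsq0 : 0 ≤ Real.sqrt (1 - x.2 ^ 2) := Real.sqrt_nonneg _
    have hub : phiM m x ≤ ψ x := by
      rw [hψx, phiM, hphix]
      exact max_le (by linarith [le_of_lt (by positivity : (0:ℝ) < 2 / (m:ℝ))]) hsq0
    have hlb : ψ x - 2 / (m : ℝ) ≤ phiM m x := by
      rw [hψx, phiM, hphix]
      exact le_max_left _ _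
    rw [Real.dist_eq, hpsix]
    have habs : |ψ x - phiM m x| ≤ 2 / (m : ℝ) := by
      rw [abs_of_nonneg (by linarith)]
      linarith
    have hmR : (2 / ε : ℝ) < (m : ℝ) := by
      apply lt_of_lt_of_le hN
      exact_mod_cast le_trans (Nat.le_succ N) hm
    have h2m : 2 / (m : ℝ) < ε := by
      rw [div_lt_iff₀ hmpos]
      rw [div_lt_iff₀ hε] at hmR
      nlinarith
    linarith [habs, h2m, abs_nonneg (ψ x - phiM m x)]
  · -- ========== part (iii) ==========
    apply MeasureTheory.tendsto_lintegral_of_dominated_convergence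
      (bound := fun w => ENNReal.ofReal (Real.sqrt (1 + gradSq ψ w))
        + ENNReal.ofReal ((Real.sqrt (1 - w.2 ^ 2))⁻¹) + 1)
    · exact fun n => RegAux.measurable_area_integrand (psiM ψ n)
    · -- domination
      intro n
      rw [Filter.EventuallyLE, ae_restrict_iff' hSGopen.measurableSet]
      apply ae_of_all
      intro w hwS
      have hwR : w ∈ R2l l := hwS.1
      have hcont : ContinuousAt ψ w := hψcontAt w hwR
      have hw2sq : w.2 ^ 2 < 1 := by nlinarith [hwR.2.1, hwR.2.2]
      rcases RegAux.psiM_fderiv_cases (m := n) hcont with h00 | hψd | ⟨_, hphid⟩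
      · have hg : gradSq (psiM ψ n) w = 0 := by
          simp [gradSq, h00]
        rw [hg]
        simp only [add_zero, Real.sqrt_one, ENNReal.ofReal_one]
        exact le_add_self
      · have hg : gradSq (psiM ψ n) w = gradSq ψ w := by
          simp only [gradSq, hψd]
        rw [hg]
        exact le_trans (self_le_add_right _ _) (self_le_add_right _ _)
      · have hg : gradSq (psiM ψ n) w = gradSq phiHat w := by
          simp only [gradSq, hphid]
        rw [hg, RegAux.sqrt_one_add_gradSq_phiHat hw2sq]
        calc ENNReal.ofReal ((Real.sqrt (1 - w.2 ^ 2))⁻¹)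
            ≤ ENNReal.ofReal (Real.sqrt (1 + gradSq ψ w))
              + ENNReal.ofReal ((Real.sqrt (1 - w.2 ^ 2))⁻¹) := le_add_self
          _ ≤ _ := self_le_add_right _ _
    · -- finiteness of the bound
      have hBmeas : Measurable (fun w : ℝ × ℝ =>
          ENNReal.ofReal ((Real.sqrt (1 - w.2 ^ 2))⁻¹)) := by
        apply Measurable.ennreal_ofReal
        exact (Real.continuous_sqrt.comp
          (continuous_const.sub (continuous_snd.pow 2))).measurable.inv
      rw [lintegral_add_right _ measurable_const, lintegral_add_right _ hBmeas]
      have h1 : ∫⁻ w in SGh l h, ENNReal.ofReal (Real.sqrt (1 + gradSq ψ w)) < ⊤ := harea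
      have h2 : ∫⁻ w in SGh l h, ENNReal.ofReal ((Real.sqrt (1 - w.2 ^ 2))⁻¹) < ⊤ :=
        lt_of_le_of_lt (lintegral_mono_set hSGsub) (RegAux.lintegral_R2l_inv_sqrt_lt_top l)
      have h3 : ∫⁻ _ in SGh l h, (1 : ℝ≥0∞) < ⊤ := by
        rw [lintegral_one, Measure.restrict_apply_univ]
        apply lt_of_le_of_lt (measure_mono hSGsub)
        rw [R2l, MeasureTheory.Measure.volume_eq_prod ℝ ℝ, Measure.prod_prod,
          Real.volume_Ioo, Real.volume_Ioo]
        exact ENNReal.mul_lt_top ENNReal.ofReal_lt_top ENNReal.ofReal_lt_top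
      exact (ENNReal.add_lt_top.2 ⟨ENNReal.add_lt_top.2 ⟨h1, h2⟩, h3⟩).ne
    · -- pointwise convergence
      rw [ae_restrict_iff' hSGopen.measurableSet]
      apply ae_of_all
      intro w hwS
      have hwR : w ∈ R2l l := hwS.1
      rcases eq_or_lt_of_le (hψmem w (hRsub hwR)).1 with hzero | hpos
      · have hψw : ψ w = 0 := hzero.symm
        have hfψ : fderiv ℝ ψ w = 0 := by
          have hmin : IsLocalMin ψ w := by
            filter_upwards [(RegAux.isOpen_R2l l).mem_nhds hwR] with x hx
            rw [hψw]; exact (hψmem x (hRsub hx)).1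
          exact hmin.fderiv_eq_zero
        have hconst : ∀ n : ℕ, gradSq (psiM ψ n) w = gradSq ψ w := by
          intro n
          have h1 : fderiv ℝ (psiM ψ n) w = 0 :=
            RegAux.psiM_fderiv_zero_of_le (by rw [hψw]; positivity)
          simp only [gradSq, h1, hfψ]
        have heq : (fun n => ENNReal.ofReal (Real.sqrt (1 + gradSq (psiM ψ n) w)))
            = fun _ => ENNReal.ofReal (Real.sqrt (1 + gradSq ψ w)) :=
          funext (fun n => by rw [hconst n])
        rw [heq]
        exact tendsto_const_nhds
      · have hlt := hψlt w hwR
        have hδ : (0 : ℝ) < min (ψ w) (phiHat w - ψ w) := lt_min hpos (by linarith)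
        have hev : ∀ᶠ n : ℕ in atTop, 1 / (n : ℝ) < min (ψ w) (phiHat w - ψ w) :=
          tendsto_one_div_atTop_nhds_zero_nat.eventually_lt_const hδ
        apply Filter.Tendsto.congr' ?_ tendsto_const_nhds
        filter_upwards [hev] with n hn
        have h1 : 1 / (n : ℝ) < ψ w := lt_of_lt_of_le hn (min_le_left _ _)
        have h2 : ψ w - 1 / (n : ℝ) < phiM n w := by
          have h3 : 1 / (n : ℝ) < phiHat w - ψ w := lt_of_lt_of_le hn (min_le_right _ _)
          have h4 : ψ w - 1 / (n : ℝ) < phiHat w - 2 / (n : ℝ) := by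
            have h5 : (2 : ℝ) / (n : ℝ) = 1 / (n : ℝ) + 1 / (n : ℝ) := by ring
            linarith
          exact lt_of_lt_of_le h4 (le_max_left _ _)
        have hfd := RegAux.psiM_fderiv_eq_psi (hψcontAt w hwR) h1 h2
        have hgs : gradSq (psiM ψ n) w = gradSq ψ w := by
          simp only [gradSq, hfd]
        rw [hgs]
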